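/- With F_{d,e} as above, the (e+1)-st finite difference satisfies Δ^{e+1} F_{d,e}(x) = (−1)^{e+1} (e+1)! · Σ_{i=1}^{e} (−1)^i C(e,i) C(e,i−1) (x−1)^{⌊e−i} (d−1−x)^{⌊i−1}. -/
import Mathlib


/-- The finite difference operator `Δ g (x) = g (x+1) - g x`. -/
noncomputable def fdiff (g : ℝ → ℝ) : ℝ → ℝ := fun x => g (x + 1) - g x

/-- The falling factorial `z^{⌊k} = z (z-1) ⋯ (z-k+1)`, with `z^{⌊0} = 1`. -/
noncomputable def ffall (z : ℝ) (k : ℕ) : ℝ := ∏ i ∈ Finset.range k, (z - i)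

lemma ffall_succ (z : ℝ) (k : ℕ) : ffall z (k + 1) = ffall z k * (z - k) := by
  simp [ffall, Finset.prod_range_succ]

lemma ffall_succ' (z : ℝ) (k : ℕ) : ffall (z + 1) (k + 1) = (z + 1) * ffall z k := by
  rw [ffall, Finset.prod_range_succ']
  simp only [Nat.cast_zero, sub_zero]
  rw [ffall, mul_comm]
  congr 1
  apply Finset.prod_congr rfl
  intro i _; push_cast; ring

lemma ffall_step (z : ℝ) (k : ℕ) :
    ffall (z + 1) (k + 1) - ffall z (k + 1) = (k + 1) * ffall z k := by
  rw [ffall_succ z k, ffall_succ']; ring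

lemma ffall_cast_eq_zero {n k : ℕ} (h : n < k) : ffall (n : ℝ) k = 0 := by
  apply Finset.prod_eq_zero (Finset.mem_range.2 h)
  simp

lemma ffall_cast (n k : ℕ) : ffall (n : ℝ) k = (n.descFactorial k : ℝ) := by
  induction k with
  | zero => simp [ffall]
  | succ k ih =>
    rw [ffall_succ, ih, Nat.descFactorial_succ]
    rcases lt_or_ge n k with h | h
    · rw [Nat.descFactorial_eq_zero_iff_lt.2 h]
      simp
    · push_cast [Nat.cast_sub h]
      ring

lemma fdiff_iter_A (c : ℝ) (n : ℕ) :
    ∀ (j : ℕ) (x : ℝ), fdiff^[j] (fun y => ffall (y + c) n) x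
      = ffall (n : ℝ) j * ffall (x + c) (n - j) := by
  intro j
  induction j with
  | zero => intro x; simp [ffall]
  | succ j ih =>
    intro x
    rw [Function.iterate_succ_apply']
    show fdiff^[j] _ (x + 1) - fdiff^[j] _ x = _
    rw [ih, ih]
    rcases lt_or_ge j n with h | h
    · have hnj : n - j = (n - j - 1) + 1 := by omega
      rw [hnj, ← mul_sub]
      have : x + 1 + c = (x + c) + 1 := by ring
      rw [this, ffall_step, ffall_succ (n : ℝ) j]
      have h1 : ((n - j - 1 : ℕ) : ℝ) + 1 = (n : ℝ) - j := by
        push_cast [Nat.cast_sub h.le, Nat.cast_sub (by omega : 1 ≤ n - j)]; ring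
      have h2 : n - (j + 1) = n - j - 1 := by omega
      rw [h1, h2]; ring
    · have h0 : n - j = 0 := by omega
      have h1 : n - (j + 1) = 0 := by omega
      rw [h0, h1, ffall_cast_eq_zero (by omega : n < j + 1)]
      simp [ffall]

lemma fdiff_iter_B (c : ℝ) (n : ℕ) :
    ∀ (j : ℕ) (x : ℝ), fdiff^[j] (fun y => ffall (c - y) n) x
      = (-1 : ℝ) ^ j * ffall (n : ℝ) j * ffall (c - j - x) (n - j) := by
  intro j
  induction j with
  | zero => intro x; simp [ffall]
  | succ j ih =>
    intro x
    rw [Function.iterate_succ_apply']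
    show fdiff^[j] _ (x + 1) - fdiff^[j] _ x = _
    rw [ih, ih]
    rcases lt_or_ge j n with h | h
    · have hnj : n - j = (n - j - 1) + 1 := by omega
      rw [hnj, ← mul_sub]
      have e1 : c - (j:ℝ) - (x + 1) = (c - ((j:ℝ) + 1) - x) := by ring
      have e2 : c - (j:ℝ) - x = (c - ((j:ℝ) + 1) - x) + 1 := by ring
      rw [e1, e2, show ∀ a b : ℝ, a - b = -(b - a) by intros; ring]
      rw [ffall_step, ffall_succ (n : ℝ) j]
      have h1 : ((n - j - 1 : ℕ) : ℝ) + 1 = (n : ℝ) - j := by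
        push_cast [Nat.cast_sub h.le, Nat.cast_sub (by omega : 1 ≤ n - j)]; ring
      have h2 : n - (j + 1) = n - j - 1 := by omega
      have h3 : c - ((j : ℝ) + 1) - x = c - ((j + 1 : ℕ) : ℝ) - x := by push_cast; ring
      rw [h1, h2, h3]; push_cast; ring
    · have h0 : n - j = 0 := by omega
      have h1 : n - (j + 1) = 0 := by omega
      rw [h0, h1, ffall_cast_eq_zero (by omega : n < j + 1)]
      simp [ffall]

lemma fdiff_leibniz (a b : ℝ → ℝ) :
    ∀ (m : ℕ) (x : ℝ), fdiff^[m] (fun y => a y * b y) x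
      = ∑ j ∈ Finset.range (m + 1),
          (m.choose j : ℝ) * fdiff^[j] a x * fdiff^[m - j] b (x + j) := by
  intro m
  induction m with
  | zero => intro x; simp
  | succ m ih =>
    intro x
    rw [Function.iterate_succ_apply']
    show fdiff^[m] _ (x + 1) - fdiff^[m] _ x = _
    rw [ih, ih, ← Finset.sum_sub_distrib]
    have key : ∀ j ∈ Finset.range (m + 1),
        (m.choose j : ℝ) * fdiff^[j] a (x + 1) * fdiff^[m - j] b (x + 1 + j)
          - (m.choose j : ℝ) * fdiff^[j] a x * fdiff^[m - j] b (x + j)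
        = (m.choose j : ℝ) * fdiff^[j + 1] a x * fdiff^[(m + 1) - (j + 1)] b (x + (j + 1 : ℕ))
          + (m.choose j : ℝ) * fdiff^[j] a x * fdiff^[(m + 1) - j] b (x + j) := by
      intro j hj
      rw [Finset.mem_range] at hj
      have ha : fdiff^[j + 1] a x = fdiff^[j] a (x + 1) - fdiff^[j] a x := by
        rw [Function.iterate_succ_apply']; rfl
      have hsub : (m + 1) - j = (m - j) + 1 := by omega
      have hb : fdiff^[(m + 1) - j] b (x + j)
          = fdiff^[m - j] b (x + j + 1) - fdiff^[m - j] b (x + j) := by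
        rw [hsub, Function.iterate_succ_apply']; rfl
      have hsub2 : (m + 1) - (j + 1) = m - j := by omega
      rw [ha, hb, hsub2]
      have : x + 1 + (j : ℝ) = x + ((j : ℕ) + 1 : ℕ) := by push_cast; ring
      rw [this]
      have : x + (j : ℝ) + 1 = x + ((j : ℕ) + 1 : ℕ) := by push_cast; ring
      rw [this]
      ring
    rw [Finset.sum_congr rfl key, Finset.sum_add_distrib]
    have pascal : ∀ j ∈ Finset.range (m + 1),
        ((m + 1).choose (j + 1) : ℝ) * fdiff^[j + 1] a x * fdiff^[(m + 1) - (j + 1)] b (x + (j + 1 : ℕ))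
        = (m.choose j : ℝ) * fdiff^[j + 1] a x * fdiff^[(m + 1) - (j + 1)] b (x + (j + 1 : ℕ))
          + (m.choose (j + 1) : ℝ) * fdiff^[j + 1] a x * fdiff^[(m + 1) - (j + 1)] b (x + (j + 1 : ℕ)) := by
      intro j hj
      rw [Nat.choose_succ_succ]
      push_cast; ring
    rw [Finset.sum_range_succ' (fun j => ((m + 1).choose j : ℝ) * fdiff^[j] a x * fdiff^[(m + 1) - j] b (x + j)) (m + 1)]
    rw [Finset.sum_congr rfl pascal, Finset.sum_add_distrib]
    have shift : ∑ j ∈ Finset.range (m + 1),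
        (m.choose (j + 1) : ℝ) * fdiff^[j + 1] a x * fdiff^[(m + 1) - (j + 1)] b (x + (j + 1 : ℕ))
        + ((m + 1).choose 0 : ℝ) * fdiff^[0] a x * fdiff^[(m + 1) - 0] b (x + (0 : ℕ))
        = ∑ j ∈ Finset.range (m + 1), (m.choose j : ℝ) * fdiff^[j] a x * fdiff^[(m + 1) - j] b (x + j) := by
      have h0 : (((m + 1).choose 0 : ℕ) : ℝ) = ((m.choose 0 : ℕ) : ℝ) := by norm_num
      rw [h0,
        ← Finset.sum_range_succ' (fun j => (m.choose j : ℝ) * fdiff^[j] a x * fdiff^[(m + 1) - j] b (x + j)) (m + 1),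
        Finset.sum_range_succ]
      simp [Nat.choose_succ_self]
    rw [add_assoc, shift]

lemma nat_id (e j : ℕ) (h1 : 1 ≤ j) (h2 : j ≤ e) :
    (e + 1).choose j * e.descFactorial j * e.descFactorial (e + 1 - j)
      = (e + 1).factorial * e.choose j * e.choose (j - 1) := by
  rw [Nat.descFactorial_eq_factorial_mul_choose, Nat.descFactorial_eq_factorial_mul_choose]
  have hsym : e.choose (e + 1 - j) = e.choose (j - 1) := by
    rw [← Nat.choose_symm (by omega : e + 1 - j ≤ e)]
    congr 1; omega
  rw [hsym]
  have hf := Nat.choose_mul_factorial_mul_factorial (show j ≤ e + 1 by omega)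
  rw [← hf]; ring

/-- With `F_{d,e}(x) = f(x-e) ⋯ f(x-1)`, `f(x) = x(d-x)`, the
`(e+1)`-st finite difference satisfies
`Δ^{e+1} F_{d,e}(x) = (-1)^{e+1} (e+1)! Σ_{i=1}^{e} (-1)^i C(e,i) C(e,i-1)
  (x-1)^{⌊e-i} (d-1-x)^{⌊i-1}`. -/
theorem stmt6 (d e : ℕ) (hd : 2 ≤ d) (he1 : 1 ≤ e) (he2 : e ≤ d - 1)
    (f F : ℝ → ℝ)
    (hf : ∀ x, f x = x * ((d : ℝ) - x))
    (hF : ∀ x, F x = ∏ i ∈ Finset.range e, f (x - e + i)) :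
    ∀ x : ℝ, fdiff^[e + 1] F x =
      (-1 : ℝ) ^ (e + 1) * ((e + 1).factorial : ℝ) *
        ∑ i ∈ Finset.Icc 1 e,
          (-1 : ℝ) ^ i * (e.choose i : ℝ) * (e.choose (i - 1) : ℝ) *
            ffall (x - 1) (e - i) * ffall ((d : ℝ) - 1 - x) (i - 1) := by
  intro x
  -- Step 1 : `F = a * b` with `a y = (y-1)^{⌊e}`, `b y = (d+e-y)^{⌊e}`.
  have hFfun : F = fun y =>
      (fun z => ffall (z + (-1 : ℝ)) e) y * (fun z => ffall ((d : ℝ) + e - z) e) y := by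
    funext y
    show F y = ffall (y + (-1 : ℝ)) e * ffall ((d : ℝ) + e - y) e
    rw [hF]
    have step1 : ∏ i ∈ Finset.range e, f (y - e + i)
        = (∏ i ∈ Finset.range e, (y - e + i)) *
          (∏ i ∈ Finset.range e, ((d : ℝ) + e - y - i)) := by
      rw [← Finset.prod_mul_distrib]
      apply Finset.prod_congr rfl
      intro i _
      rw [hf]; ring
    rw [step1]
    congr 1
    · rw [ffall, ← Finset.prod_range_reflect (fun j => (y + (-1 : ℝ)) - (j : ℝ)) e]
      apply Finset.prod_congr rfl
      intro i hi
      rw [Finset.mem_range] at hi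
      have h1 : e - 1 - i = e - (i + 1) := by omega
      rw [h1, Nat.cast_sub (by omega : i + 1 ≤ e)]
      push_cast; ring
  rw [hFfun, fdiff_leibniz]
  -- Step 2 : rewrite each summand explicitly.
  have hterm : ∀ j ∈ Finset.range (e + 1 + 1),
      ((e + 1).choose j : ℝ) * fdiff^[j] (fun z => ffall (z + (-1 : ℝ)) e) x *
        fdiff^[e + 1 - j] (fun z => ffall ((d : ℝ) + e - z) e) (x + j)
      = ((e + 1).choose j : ℝ) * (ffall (e : ℝ) j * ffall (x + -1) (e - j)) *
        ((-1 : ℝ) ^ (e + 1 - j) * ffall (e : ℝ) (e + 1 - j) *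
          ffall ((d : ℝ) + e - (e + 1 - j : ℕ) - (x + j)) (e - (e + 1 - j))) := by
    intro j _
    rw [fdiff_iter_A, fdiff_iter_B]
  rw [Finset.sum_congr rfl hterm]
  -- Step 3 : drop the vanishing boundary terms `j = 0` and `j = e+1`.
  rw [← Finset.sum_subset (show Finset.Icc 1 e ⊆ Finset.range (e + 1 + 1) by
        intro j hj; rw [Finset.mem_Icc] at hj; rw [Finset.mem_range]; omega)]
  · -- per-term identity on `Icc 1 e`
    rw [Finset.mul_sum]
    apply Finset.sum_congr rfl
    intro j hj
    rw [Finset.mem_Icc] at hj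
    obtain ⟨hj1, hj2⟩ := hj
    have h1 : e - (e + 1 - j) = j - 1 := by omega
    have h2 : ((e + 1 - j : ℕ) : ℝ) = (e : ℝ) + 1 - j := by
      rw [Nat.cast_sub (by omega : j ≤ e + 1)]; push_cast; ring
    have h3 : (d : ℝ) + e - ((e + 1 - j : ℕ) : ℝ) - (x + j) = (d : ℝ) - 1 - x := by
      rw [h2]; ring
    have h4 : x + (-1 : ℝ) = x - 1 := by ring
    have h5 : (-1 : ℝ) ^ (e + 1 - j) = (-1 : ℝ) ^ (e + 1) * (-1 : ℝ) ^ j := by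
      have hsq : (-1 : ℝ) ^ j * (-1 : ℝ) ^ j = 1 := by
        rw [← mul_pow]; norm_num
      have hadd : (-1 : ℝ) ^ (e + 1 - j) * (-1 : ℝ) ^ j = (-1 : ℝ) ^ (e + 1) := by
        rw [← pow_add]; congr 1; omega
      calc (-1 : ℝ) ^ (e + 1 - j)
          = (-1 : ℝ) ^ (e + 1 - j) * ((-1 : ℝ) ^ j * (-1 : ℝ) ^ j) := by rw [hsq, mul_one]
        _ = ((-1 : ℝ) ^ (e + 1 - j) * (-1 : ℝ) ^ j) * (-1 : ℝ) ^ j := by ring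
        _ = (-1 : ℝ) ^ (e + 1) * (-1 : ℝ) ^ j := by rw [hadd]
    have h6 : ((e + 1).choose j : ℝ) * ffall (e : ℝ) j * ffall (e : ℝ) (e + 1 - j)
        = ((e + 1).factorial : ℝ) * (e.choose j : ℝ) * (e.choose (j - 1) : ℝ) := by
      rw [ffall_cast, ffall_cast]
      exact_mod_cast nat_id e j hj1 hj2
    rw [h1, h3, h4, h5]
    linear_combination ((-1 : ℝ) ^ (e + 1) * (-1 : ℝ) ^ j *
      ffall (x - 1) (e - j) * ffall ((d : ℝ) - 1 - x) (j - 1)) * h6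
  · -- boundary terms vanish
    intro j hjr hjn
    rw [Finset.mem_range] at hjr
    rw [Finset.mem_Icc] at hjn
    have : j = 0 ∨ j = e + 1 := by omega
    rcases this with h | h
    · subst h
      rw [show e + 1 - 0 = e + 1 from rfl, ffall_cast_eq_zero (Nat.lt_succ_self e)]
      ring
    · subst h
      rw [ffall_cast_eq_zero (Nat.lt_succ_self e)]
      ring
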